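/- Let θ ≠ 1, β > n, s > n/2, and suppose m : ℝⁿ → ℂ satisfies, for all j with jθ > 0 and all s' ≤ s with s' > n/2: ‖m^j‖_{H^{s'}} ≤ C 2^{jθ(2s'-β)/2}, where m^j(ξ) = m(2^j ξ)φ(ξ) for a fixed Littlewood–Paley bump φ supported in {1/2 ≤ |ξ| ≤ 2} with ∑_j φ(2^{-j}ξ) = 1 for ξ ≠ 0. Then the kernel 𝒦^l := ∑_{j: jθ>0} 𝒦_{m_j}, where m_j(ξ) = m(ξ)φ(2^{-j}ξ), is integrable: ‖𝒦^l‖_{L¹(ℝⁿ)} < ∞. -/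

import Mathlib

/-!
An `L¹`-normalised dilation does not change the `L¹` norm of a kernel, so
`‖𝒦_{m_j}‖_{L¹} = ‖𝒦_{m^j}‖_{L¹} = ‖𝓕 m^j‖_{L¹}`. Writing `𝓕 m^j` as `⟨ξ⟩^{-s'}` times
`⟨ξ⟩^{s'} 𝓕 m^j`, Cauchy–Schwarz bounds this by `‖⟨·⟩^{-s'}‖_{L²} ‖m^j‖_{H^{s'}}`, and the weight
is square integrable once `s' > n/2`. Taking `n/2 < s' ≤ s` with `2s' < β`, the hypothesis makes
these bounds decay like `2^{-|j||θ|(β-2s')/2}`, a summable geometric sequence.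
-/

open MeasureTheory Real Complex
open scoped ENNReal FourierTransform

/-- The `L²` Sobolev norm of order `s`: `‖F‖_{H^s} = ‖(1+|ξ|²)^{s/2} F̂(ξ)‖_{L²}`. -/
noncomputable def sobolevNorm {n : ℕ} (s : ℝ) (F : EuclideanSpace ℝ (Fin n) → ℂ) : ℝ≥0∞ :=
  eLpNorm (fun ξ => ((1 + ‖ξ‖ ^ 2) ^ (s / 2) : ℝ) • (𝓕 F ξ)) 2 volume

open scoped RealInnerProductSpace

section Dilation

variable {E F : Type*} [NormedAddCommGroup E] [NormedSpace ℝ E] [MeasurableSpace E] [BorelSpace E]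
  [FiniteDimensional ℝ E] (μ : Measure E) [μ.IsAddHaarMeasure]
  [NormedAddCommGroup F]

lemma eLpNorm_comp_smul {g : E → F} (hg : AEStronglyMeasurable g μ) {c : ℝ} (hc : c ≠ 0)
    {p : ℝ≥0∞} (hp : p ≠ ∞) :
    eLpNorm (fun x => g (c • x)) p μ =
      ENNReal.ofReal |(c ^ Module.finrank ℝ E)⁻¹| ^ p⁻¹.toReal * eLpNorm g p μ := by
  have hmap := Measure.map_addHaar_smul μ hc
  rw [← Function.comp_def, ← eLpNorm_map_measure (hmap ▸ hg.smul_measure _)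
    (measurable_const_smul c).aemeasurable, hmap, eLpNorm_smul_measure_of_ne_top hp, smul_eq_mul,
    one_div]

end Dilation

section JapaneseBracket

variable {V : Type*} [NormedAddCommGroup V] [InnerProductSpace ℝ V] [FiniteDimensional ℝ V]
  [MeasurableSpace V] [BorelSpace V]

lemma memLp_two_one_add_norm_sq_rpow_neg {s : ℝ} (hs : (Module.finrank ℝ V : ℝ) < 2 * s) :
    MemLp (fun ξ : V => (1 + ‖ξ‖ ^ 2) ^ (-s / 2)) 2 volume := by
  have hmeas : AEStronglyMeasurable (fun ξ : V => (1 + ‖ξ‖ ^ 2) ^ (-s / 2)) volume :=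
    (Continuous.rpow_const (by fun_prop) fun ξ => Or.inl (by positivity)).aestronglyMeasurable
  refine (memLp_two_iff_integrable_sq hmeas).2 ?_
  refine (integrable_rpow_neg_one_add_norm_sq hs).congr (.of_forall fun ξ => ?_)
  dsimp only
  rw [← Real.rpow_mul_natCast (by positivity)]
  ring_nf

end JapaneseBracket

section Fourier

variable {V E : Type*} [NormedAddCommGroup V] [InnerProductSpace ℝ V] [FiniteDimensional ℝ V]
  [MeasurableSpace V] [BorelSpace V] [NormedAddCommGroup E] [NormedSpace ℂ E]

lemma Real.aestronglyMeasurable_fourier (f : V → E) : AEStronglyMeasurable (𝓕 f) volume := by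
  by_cases hf : Integrable f volume
  · exact (VectorFourier.fourierIntegral_continuous Real.continuous_fourierChar
      continuous_inner hf).aestronglyMeasurable
  · have : 𝓕 f = 0 := funext fun w =>
      integral_undef fun h => hf ((Real.fourierIntegral_convergent_iff w).mp h)
    rw [this]
    exact aestronglyMeasurable_const

lemma Real.aestronglyMeasurable_fourierInv (f : V → E) :
    AEStronglyMeasurable (𝓕⁻ f) volume := by
  rw [Real.fourierInv_eq_fourier_comp_neg]
  exact Real.aestronglyMeasurable_fourier _

lemma Real.eLpNorm_fourierInv (f : V → E) (p : ℝ≥0∞) :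
    eLpNorm (𝓕⁻ f) p volume = eLpNorm (𝓕 f) p volume := by
  have : 𝓕⁻ f = 𝓕 f ∘ Neg.neg := funext (Real.fourierInv_eq_fourier_neg f)
  rw [this, eLpNorm_comp_measurePreserving (Real.aestronglyMeasurable_fourier f)
    (Measure.measurePreserving_neg volume)]

lemma Real.fourierInv_comp_smul (f : V → E) {c : ℝ} (hc : c ≠ 0) :
    𝓕⁻ (fun ξ => f (c • ξ)) = |(c ^ Module.finrank ℝ V)⁻¹| • fun x => 𝓕⁻ f (c⁻¹ • x) := by
  ext x
  have : 𝓕⁻ (fun ξ => f (c • ξ)) x = ∫ ξ, (fun η => 𝐞 ⟪η, c⁻¹ • x⟫ • f η) (c • ξ) := by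
    rw [Real.fourierInv_eq]
    congr 1 with ξ
    dsimp only
    rw [real_inner_smul_left, real_inner_smul_right, ← mul_assoc, mul_inv_cancel₀ hc, one_mul]
  rw [this, Measure.integral_comp_smul volume (fun η => 𝐞 ⟪η, c⁻¹ • x⟫ • f η),
    ← Real.fourierInv_eq, Pi.smul_apply]

lemma Real.eLpNorm_one_fourierInv_comp_smul (f : V → E) {c : ℝ} (hc : c ≠ 0) :
    eLpNorm (𝓕⁻ fun ξ => f (c • ξ)) 1 volume = eLpNorm (𝓕⁻ f) 1 volume := by
  rw [Real.fourierInv_comp_smul f hc, eLpNorm_const_smul (𝕜 := ℝ),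
    eLpNorm_comp_smul volume (Real.aestronglyMeasurable_fourierInv f) (inv_ne_zero hc)
      ENNReal.one_ne_top, inv_one, ENNReal.toReal_one, ENNReal.rpow_one, ← mul_assoc,
    Real.enorm_eq_ofReal_abs, abs_abs, ← ENNReal.ofReal_mul (abs_nonneg _), ← abs_mul, inv_pow,
    inv_inv, inv_mul_cancel₀ (pow_ne_zero _ hc), abs_one, ENNReal.ofReal_one, one_mul]

end Fourier

lemma summable_pow_natAbs {r : ℝ} (h0 : 0 ≤ r) (h1 : r < 1) :
    Summable fun j : ℤ => r ^ j.natAbs := by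
  rw [summable_int_iff_summable_nat_and_neg]
  simpa only [Int.natAbs_neg, Int.natAbs_natCast, and_self] using
    summable_geometric_of_lt_one h0 h1

lemma eLpNorm_one_tsum_le {α ι E : Type*} [MeasurableSpace α] {μ : Measure α} [Countable ι]
    [NormedAddCommGroup E] {f : ι → α → E} (hf : ∀ i, AEStronglyMeasurable (f i) μ) :
    eLpNorm (fun x => ∑' i, f i x) 1 μ ≤ ∑' i, eLpNorm (f i) 1 μ := by
  simp only [eLpNorm_one_eq_lintegral_enorm]
  calc ∫⁻ x, ‖∑' i, f i x‖ₑ ∂μ ≤ ∫⁻ x, ∑' i, ‖f i x‖ₑ ∂μ :=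
        lintegral_mono fun x => enorm_tsum_le_tsum_enorm
    _ = ∑' i, ∫⁻ x, ‖f i x‖ₑ ∂μ := lintegral_tsum fun i => (hf i).enorm

lemma eLpNorm_one_fourier_le_mul_sobolevNorm {n : ℕ} (s : ℝ) (F : EuclideanSpace ℝ (Fin n) → ℂ) :
    eLpNorm (𝓕 F) 1 volume ≤
      eLpNorm (fun ξ : EuclideanSpace ℝ (Fin n) => (1 + ‖ξ‖ ^ 2) ^ (-s / 2)) 2 volume *
        sobolevNorm s F := by
  have hweight (t : ℝ) : AEStronglyMeasurable
      (fun ξ : EuclideanSpace ℝ (Fin n) => (1 + ‖ξ‖ ^ 2) ^ t) volume :=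
    (Continuous.rpow_const (by fun_prop) fun ξ => Or.inl (by positivity)).aestronglyMeasurable
  have hsplit : 𝓕 F = (fun ξ : EuclideanSpace ℝ (Fin n) => (1 + ‖ξ‖ ^ 2) ^ (-s / 2)) •
      fun ξ => ((1 + ‖ξ‖ ^ 2) ^ (s / 2) : ℝ) • 𝓕 F ξ := by
    ext ξ
    rw [Pi.smul_apply', smul_smul, ← Real.rpow_add (by positivity), neg_div, neg_add_cancel,
      Real.rpow_zero, one_smul]
  rw [hsplit]
  exact eLpNorm_smul_le_mul_eLpNorm ((hweight _).smul (Real.aestronglyMeasurable_fourier F))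
    (hweight _)

lemma eLpNorm_one_fourierInv_dyadic_piece_le {n : ℕ} (m : EuclideanSpace ℝ (Fin n) → ℂ)
    (φ : EuclideanSpace ℝ (Fin n) → ℝ) (j : ℤ) (s : ℝ) :
    eLpNorm (𝓕⁻ fun ξ => m ξ * (φ ((2 : ℝ) ^ (-j) • ξ) : ℂ)) 1 volume ≤
      eLpNorm (fun ξ : EuclideanSpace ℝ (Fin n) => (1 + ‖ξ‖ ^ 2) ^ (-s / 2)) 2 volume *
        sobolevNorm s (fun ξ => m ((2 : ℝ) ^ j • ξ) * (φ ξ : ℂ)) := by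
  have hsymbol : (fun ξ => m ξ * (φ ((2 : ℝ) ^ (-j) • ξ) : ℂ)) =
      fun ξ => (fun η => m ((2 : ℝ) ^ j • η) * (φ η : ℂ)) ((2 : ℝ) ^ (-j) • ξ) := by
    ext ξ
    simp only [smul_smul, zpow_neg, mul_inv_cancel₀ (zpow_ne_zero j (two_ne_zero : (2 : ℝ) ≠ 0)),
      one_smul]
  rw [hsymbol, Real.eLpNorm_one_fourierInv_comp_smul (fun η => m ((2 : ℝ) ^ j • η) * (φ η : ℂ))
    (zpow_ne_zero _ two_ne_zero), Real.eLpNorm_fourierInv]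
  exact eLpNorm_one_fourier_le_mul_sobolevNorm s _

lemma two_rpow_mul_div_two_eq_pow_natAbs {j : ℤ} {θ b : ℝ} (hj : 0 < (j : ℝ) * θ) :
    (2 : ℝ) ^ ((j : ℝ) * θ * b / 2) = ((2 : ℝ) ^ (b / 2 * |θ|)) ^ j.natAbs := by
  have : (j : ℝ) * θ = j.natAbs * |θ| := by
    rw [Nat.cast_natAbs, Int.cast_abs, ← abs_mul, abs_of_pos hj]
  rw [← Real.rpow_mul_natCast (by norm_num), this]
  ring_nf

lemma eLpNorm_one_dyadic_kernel_le {n : ℕ} {θ β s C : ℝ} (m : EuclideanSpace ℝ (Fin n) → ℂ)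
    (φ : EuclideanSpace ℝ (Fin n) → ℝ) (j : ℤ)
    (hmj : 0 < (j : ℝ) * θ → sobolevNorm s (fun ξ => m ((2 : ℝ) ^ j • ξ) * (φ ξ : ℂ)) ≤
      ENNReal.ofReal (C * (2 : ℝ) ^ ((j : ℝ) * θ * (2 * s - β) / 2))) :
    eLpNorm (fun x => if 0 < (j : ℝ) * θ then
      𝓕⁻ (fun ξ => m ξ * (φ ((2 : ℝ) ^ (-j) • ξ) : ℂ)) x else 0) 1 volume ≤
        eLpNorm (fun ξ : EuclideanSpace ℝ (Fin n) => (1 + ‖ξ‖ ^ 2) ^ (-s / 2)) 2 volume *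
          ENNReal.ofReal C * ENNReal.ofReal (((2 : ℝ) ^ ((2 * s - β) / 2 * |θ|)) ^ j.natAbs) := by
  split_ifs with hj
  · refine (eLpNorm_one_fourierInv_dyadic_piece_le m φ j s).trans ?_
    rw [mul_assoc, ← ENNReal.ofReal_mul' (by positivity), ← two_rpow_mul_div_two_eq_pow_natAbs hj]
    gcongr
    exact hmj hj
  · simp

theorem statement3_general (n : ℕ) (θ β s : ℝ) (hβ : β > n) (hs : s > n / 2)
    (φ : EuclideanSpace ℝ (Fin n) → ℝ)
    (m : EuclideanSpace ℝ (Fin n) → ℂ) (C : ℝ)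
    (hm : ∀ j : ℤ, 0 < (j : ℝ) * θ → ∀ s' : ℝ, n / 2 < s' → s' ≤ s →
      sobolevNorm s' (fun ξ => m ((2 : ℝ) ^ j • ξ) * (φ ξ : ℂ)) ≤
        ENNReal.ofReal (C * (2 : ℝ) ^ ((j : ℝ) * θ * (2 * s' - β) / 2))) :
    eLpNorm (fun x : EuclideanSpace ℝ (Fin n) =>
        ∑' j : ℤ, if 0 < (j : ℝ) * θ then
          𝓕⁻ (fun ξ => m ξ * (φ ((2 : ℝ) ^ (-j) • ξ) : ℂ)) x else 0) 1 volume < ⊤ := by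
  rcases eq_or_ne θ 0 with rfl | hθ
  · simp
  obtain ⟨s', hs'n, hs's, hs'β⟩ : ∃ s' : ℝ, n / 2 < s' ∧ s' ≤ s ∧ 2 * s' < β :=
    ⟨min s ((n + β) / 4), lt_min hs (by linarith), min_le_left _ _,
      by linarith [min_le_right s ((n + β) / 4)]⟩
  have hweight := memLp_two_one_add_norm_sq_rpow_neg (V := EuclideanSpace ℝ (Fin n)) (s := s')
    (by rw [finrank_euclideanSpace_fin]; linarith)
  have hgeom : Summable fun j : ℤ => ((2 : ℝ) ^ ((2 * s' - β) / 2 * |θ|)) ^ j.natAbs :=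
    summable_pow_natAbs (by positivity) (Real.rpow_lt_one_of_one_lt_of_neg one_lt_two
      (mul_neg_of_neg_of_pos (by linarith) (abs_pos.2 hθ)))
  refine (eLpNorm_one_tsum_le fun j => ?_).trans_lt ?_
  · split_ifs
    exacts [Real.aestronglyMeasurable_fourierInv _, aestronglyMeasurable_const]
  refine (ENNReal.tsum_le_tsum fun j =>
    eLpNorm_one_dyadic_kernel_le (β := β) m φ j fun hj => hm j hj s' hs'n hs's).trans_lt ?_
  rw [ENNReal.tsum_mul_left]
  exact ENNReal.mul_lt_top (ENNReal.mul_lt_top hweight.2 ENNReal.ofReal_lt_top)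
    hgeom.tsum_ofReal_lt_top

/-- If `θ ≠ 1`, `β > n`, `s > n/2` and the pieces `m^j(ξ) = m(2^j ξ) φ(ξ)` satisfy
`‖m^j‖_{H^{s'}} ≤ C 2^{jθ(2s'-β)/2}` for all `j` with `jθ > 0` and all `n/2 < s' ≤ s`,
then the kernel `𝒦^l = ∑_{j : jθ>0} 𝒦_{m_j}`, `m_j(ξ) = m(ξ) φ(2^{-j} ξ)`, is integrable. -/
theorem statement3 (n : ℕ) (θ β s : ℝ) (hθ : θ ≠ 1) (hβ : β > n) (hs : s > n / 2)
    (φ : EuclideanSpace ℝ (Fin n) → ℝ)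
    (hφsupp : Function.support φ ⊆ {ξ | 1/2 ≤ ‖ξ‖ ∧ ‖ξ‖ ≤ 2})
    (hφsum : ∀ ξ : EuclideanSpace ℝ (Fin n), ξ ≠ 0 → ∑' j : ℤ, φ ((2 : ℝ) ^ (-j) • ξ) = 1)
    (m : EuclideanSpace ℝ (Fin n) → ℂ) (C : ℝ)
    (hm : ∀ j : ℤ, 0 < (j : ℝ) * θ → ∀ s' : ℝ, n / 2 < s' → s' ≤ s →
      sobolevNorm s' (fun ξ => m ((2 : ℝ) ^ j • ξ) * (φ ξ : ℂ)) ≤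
        ENNReal.ofReal (C * (2 : ℝ) ^ ((j : ℝ) * θ * (2 * s' - β) / 2))) :
    eLpNorm (fun x : EuclideanSpace ℝ (Fin n) =>
        ∑' j : ℤ, if 0 < (j : ℝ) * θ then
          𝓕⁻ (fun ξ => m ξ * (φ ((2 : ℝ) ^ (-j) • ξ) : ℂ)) x else 0) 1 volume < ⊤ :=
  statement3_general n θ β s hβ hs φ m C hm
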